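/- Suppose integers a, b₁, d₀, e₀, t, S with S ≥ 0 satisfy e₀²t − 2d₀² = 1, a·t·e₀ − b₁·d₀ = 1, and 2ta² = b₁² + S. Then S ≤ 2, and if S = 0 then 2(1 + 2d₀²) is a perfect square (which is impossible); hence S ∈ {1, 2}. -/

import Mathlib

/-!
Eliminating `a` and `t` from the three relations gives the identity
`(b₁ - 2d₀)² = (1 + 2d₀²)(2 - S)`, the reduced discriminant of the quadratic in `b₁`.
Since `1 + 2d₀² > 0`, this forces `S ≤ 2`, and for `S = 0` it exhibits `2(1 + 2d₀²)` as a square,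
which is impossible because that number is `2` modulo `4`.
-/

theorem sq_sub_two_mul_eq_mul_two_sub {R : Type*} [CommRing R] {a b d e t S : R}
    (h1 : e ^ 2 * t - 2 * d ^ 2 = 1) (h2 : a * t * e - b * d = 1)
    (h3 : 2 * t * a ^ 2 = b ^ 2 + S) :
    (b - 2 * d) ^ 2 = (1 + 2 * d ^ 2) * (2 - S) := by
  linear_combination (-(b ^ 2) - S) * h1 + 2 * (a * t * e + 1 + b * d) * h2 - t * e ^ 2 * h3

theorem Int.sq_ne_two_mul_of_odd {k m : ℤ} (hm : Odd m) : k ^ 2 ≠ 2 * m := by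
  intro h
  obtain ⟨j, rfl⟩ : Even k := (Int.even_pow' two_ne_zero).mp ⟨m, by rw [h]; ring⟩
  exact Int.not_even_iff_odd.mpr hm ⟨j ^ 2, by linarith [show (j + j) ^ 2 = 4 * j ^ 2 by ring]⟩

theorem stmt_19 (a b₁ d₀ e₀ t S : ℤ) (hS : 0 ≤ S)
    (h1 : e₀ ^ 2 * t - 2 * d₀ ^ 2 = 1)
    (h2 : a * t * e₀ - b₁ * d₀ = 1)
    (h3 : 2 * t * a ^ 2 = b₁ ^ 2 + S) :
    S ≤ 2 ∧ (S = 0 → ∃ k : ℤ, k ^ 2 = 2 * (1 + 2 * d₀ ^ 2)) ∧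
      (S = 1 ∨ S = 2) := by
  have key := sq_sub_two_mul_eq_mul_two_sub h1 h2 h3
  have hodd : Odd (1 + 2 * d₀ ^ 2) := by rw [add_comm]; exact odd_two_mul_add_one _
  have hle : S ≤ 2 :=
    sub_nonneg.mp (nonneg_of_mul_nonneg_right (key ▸ sq_nonneg _) (by positivity))
  have hsq : S = 0 → ∃ k : ℤ, k ^ 2 = 2 * (1 + 2 * d₀ ^ 2) :=
    fun h0 => ⟨b₁ - 2 * d₀, by rw [key, h0]; ring⟩
  have hne : S ≠ 0 := fun h0 =>
    let ⟨_, hk⟩ := hsq h0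
    Int.sq_ne_two_mul_of_odd hodd hk
  exact ⟨hle, hsq, by omega⟩
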